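/- Assume A_{2k}(δ) is semisimple with δ ∉ {0,...,2k-2}. If λ ⊢ k-l and ρ ⊢ k-r are distinct elements of the index set of simple modules (i.e. (λ,l) ≠ (ρ,r)), then there exists a supersymmetric polynomial p in 2k variables such that p evaluated at the contents (c_λ(1),...,c_λ(2k)) of the standard path for λ differs from p evaluated at (c_ρ(1),...,c_ρ(2k)). -/
import Mathlib


open MvPolynomial

/-- A polynomial `p ∈ ℂ[x₁,…,x_r]` (variables indexed by `1,…,r ⊆ ℕ`) is
*supersymmetric* if it is symmetric separately in the odd-indexed and the
even-indexed variables, and satisfies the cancellation property: substituting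
`x₁ = y`, `x₂ = -y` yields a polynomial independent of `y`. -/
def IsSupersymmetric (r : ℕ) (p : MvPolynomial ℕ ℂ) : Prop :=
  p ∈ MvPolynomial.supported ℂ (Set.Icc 1 r) ∧
  (∀ π : Equiv.Perm ℕ, (∀ i, π i % 2 = i % 2) → (∀ i, i ∉ Set.Icc 1 r → π i = i) →
      rename π p = p) ∧
  (∀ y y' : ℂ,
    bind₁ (fun i => if i = 1 then C y else if i = 2 then C (-y) else X i) p =
      bind₁ (fun i => if i = 1 then C y' else if i = 2 then C (-y') else X i) p)

/-- `c : ℕ → ℂ` (on positions `1,…,2k`) is a content vector for the standard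
path of `(λ,l)`: the multiset of values at odd positions is
`{(-δ/2)ˡ} ∪ {i - δ/2 : 0 ≤ i ≤ k-l-1}` and the multiset of values at even
positions is `{(δ/2)ˡ} ∪ {c(a) - δ/2 : a ∈ λ}`. -/
def IsContentVector (δ : ℂ) (k l : ℕ) (lam : YoungDiagram) (c : ℕ → ℂ) : Prop :=
  (((Finset.Icc 1 (2 * k)).filter (fun i => i % 2 = 1)).val.map c =
      Multiset.replicate l (-(δ / 2)) +
        (Multiset.range (k - l)).map (fun i => (i : ℂ) - δ / 2)) ∧
  (((Finset.Icc 1 (2 * k)).filter (fun i => i % 2 = 0)).val.map c =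
      Multiset.replicate l (δ / 2) +
        lam.cells.val.map (fun a => ((((a.2 : ℤ) - (a.1 : ℤ) : ℤ)) : ℂ) - δ / 2))


section Aux

lemma psum_multiset_eq {s t : Multiset ℂ}
    (h : ∀ m : ℕ, ((s.map (· ^ m)).sum = (t.map (· ^ m)).sum)) : s = t := by
  classical
  set u := (s + t).toFinset with hu
  set d : ℂ → ℂ := fun z => (s.count z : ℂ) - (t.count z : ℂ) with hd
  have hsub : ∀ w : Multiset ℂ, w ≤ s + t → ∀ m : ℕ,
      (w.map (· ^ m)).sum = ∑ z ∈ u, (w.count z : ℂ) * z ^ m := by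
    intro w hw m
    rw [Finset.sum_multiset_map_count]
    rw [Finset.sum_subset (s₂ := u) (fun x hx => by
      simp only [hu, Multiset.mem_toFinset] at hx ⊢
      exact Multiset.mem_of_le hw hx : w.toFinset ⊆ u)]
    · apply Finset.sum_congr rfl
      intro x _; simp [nsmul_eq_mul]
    · intro x _ hx
      simp [Multiset.count_eq_zero_of_notMem (by simpa using hx)]
  have key : ∀ m : ℕ, ∑ z ∈ u, d z * z ^ m = 0 := by
    intro m
    have hs := hsub s (Multiset.le_add_right s t) m
    have ht := hsub t (Multiset.le_add_left t s) m
    have hh := h m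
    rw [hs, ht] at hh
    simp only [hd, sub_mul, Finset.sum_sub_distrib, hh, sub_self]
  have key2 : ∀ R : Polynomial ℂ, ∑ z ∈ u, d z * R.eval z = 0 := by
    intro R
    have he : ∀ z : ℂ, d z * R.eval z =
        ∑ m ∈ Finset.range (R.natDegree + 1), R.coeff m * (d z * z ^ m) := by
      intro z
      rw [Polynomial.eval_eq_sum_range, Finset.mul_sum]
      apply Finset.sum_congr rfl
      intro m _; ring
    simp_rw [he]
    rw [Finset.sum_comm]
    simp_rw [← Finset.mul_sum, key, mul_zero, Finset.sum_const_zero]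
  have hcount : ∀ z : ℂ, s.count z = t.count z := by
    intro z
    by_cases hz : z ∈ u
    · have hkey := key2 (∏ w ∈ u.erase z, (Polynomial.X - Polynomial.C w))
      rw [Finset.sum_eq_single z] at hkey
      · simp only [Polynomial.eval_prod, Polynomial.eval_sub, Polynomial.eval_X,
          Polynomial.eval_C] at hkey
        have hprod : ∏ w ∈ u.erase z, (z - w) ≠ 0 := by
          rw [Finset.prod_ne_zero_iff]
          intro w hw
          exact sub_ne_zero.2 (Ne.symm (Finset.ne_of_mem_erase hw))
        have hdz : d z = 0 := by
          rcases mul_eq_zero.1 hkey with h' | h'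
          · exact h'
          · exact absurd h' hprod
        rw [hd] at hdz
        have : (s.count z : ℂ) = (t.count z : ℂ) := by
          simpa [sub_eq_zero] using hdz
        exact_mod_cast this
      · intro w hw hwz
        have : Polynomial.eval w (∏ x ∈ u.erase z, (Polynomial.X - Polynomial.C x)) = 0 := by
          rw [Polynomial.eval_prod]
          exact Finset.prod_eq_zero (Finset.mem_erase.2 ⟨hwz, hw⟩) (by simp)
        rw [this, mul_zero]
      · intro h'; exact absurd hz h'
    · have hz' : z ∉ s + t := by simpa [hu, Multiset.mem_toFinset] using hz
      rw [Multiset.mem_add] at hz'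
      push_neg at hz'
      rw [Multiset.count_eq_zero_of_notMem hz'.1, Multiset.count_eq_zero_of_notMem hz'.2]
  exact Multiset.ext.2 hcount

/-- each coordinate of a cell is less than the number of cells -/
lemma cell_lt_card (μ : YoungDiagram) {a : ℕ × ℕ} (ha : a ∈ μ.cells) :
    a.1 < μ.card ∧ a.2 < μ.card := by
  constructor
  · have hsub : (Finset.range (a.1 + 1)).image (fun t => (t, 0)) ⊆ μ.cells := by
      intro x hx
      simp only [Finset.mem_image, Finset.mem_range] at hx
      obtain ⟨t, ht, rfl⟩ := hx
      exact μ.up_left_mem (Nat.lt_succ_iff.1 ht) (Nat.zero_le _) (by simpa using ha)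
    have := Finset.card_le_card hsub
    rw [Finset.card_image_of_injective _ (fun x y hxy => by simpa using hxy)] at this
    simpa [YoungDiagram.card] using this
  · have hsub : (Finset.range (a.2 + 1)).image (fun t => (0, t)) ⊆ μ.cells := by
      intro x hx
      simp only [Finset.mem_image, Finset.mem_range] at hx
      obtain ⟨t, ht, rfl⟩ := hx
      exact μ.up_left_mem (Nat.zero_le _) (Nat.lt_succ_iff.1 ht) (by simpa using ha)
    have := Finset.card_le_card hsub
    rw [Finset.card_image_of_injective _ (fun x y hxy => by simpa using hxy)] at this
    simpa [YoungDiagram.card] using this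

/-- the content multiset of a Young diagram -/
def contents (μ : YoungDiagram) : Multiset ℤ :=
  μ.cells.val.map (fun a => (a.2 : ℤ) - (a.1 : ℤ))

def diagCell (d : ℤ) (t : ℕ) : ℕ × ℕ := (t + (-d).toNat, t + d.toNat)

lemma diagCell_content (d : ℤ) (t : ℕ) :
    ((diagCell d t).2 : ℤ) - ((diagCell d t).1 : ℤ) = d := by
  simp only [diagCell]
  push_cast
  omega

lemma diagCell_min (d : ℤ) (t : ℕ) : min (diagCell d t).1 (diagCell d t).2 = t := by
  simp only [diagCell]
  omega

lemma eq_diagCell {a : ℕ × ℕ} {d : ℤ} (h : (a.2 : ℤ) - (a.1 : ℤ) = d) :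
    a = diagCell d (min a.1 a.2) := by
  obtain ⟨i, j⟩ := a
  simp only [diagCell, Prod.mk.injEq]
  constructor <;> omega

lemma mem_iff_min_lt_count (μ : YoungDiagram) (i j : ℕ) :
    (i, j) ∈ μ ↔ min i j < Multiset.count ((j : ℤ) - (i : ℤ)) (contents μ) := by
  classical
  set d : ℤ := (j : ℤ) - i with hdd
  set F : Finset (ℕ × ℕ) := μ.cells.filter (fun a => (a.2 : ℤ) - (a.1 : ℤ) = d) with hF
  have hcount : Multiset.count d (contents μ) = F.card := by
    rw [contents, Multiset.count_map, hF, Finset.card_def, Finset.filter_val]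
    congr 1
    apply Multiset.filter_congr
    intro x _
    exact eq_comm
  -- the set of diagonal positions
  set S : Finset ℕ := F.image (fun a => min a.1 a.2) with hS
  have hSdc : ∀ y ∈ S, ∀ y' ≤ y, y' ∈ S := by
    intro y hy y' hy'
    rw [hS, Finset.mem_image] at hy
    obtain ⟨a, ha, hay⟩ := hy
    rw [hF, Finset.mem_filter] at ha
    have had : a = diagCell d y := by rw [← hay]; exact eq_diagCell ha.2
    have hmem : diagCell d y' ∈ μ.cells := by
      apply μ.up_left_mem (i2 := (diagCell d y).1) (j2 := (diagCell d y).2)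
      · simp only [diagCell]; omega
      · simp only [diagCell]; omega
      · rw [← had]; exact ha.1
    rw [hS, Finset.mem_image]
    refine ⟨diagCell d y', ?_, diagCell_min d y'⟩
    rw [hF, Finset.mem_filter]
    exact ⟨hmem, diagCell_content d y'⟩
  have hSrange : S = Finset.range S.card := by
    have hsub : S ⊆ Finset.range S.card := by
      intro x hx
      rw [Finset.mem_range]
      by_contra hlt
      push_neg at hlt
      have : Finset.range (x + 1) ⊆ S := by
        intro y hy
        rw [Finset.mem_range] at hy
        exact hSdc x hx y (Nat.lt_succ_iff.1 hy)
      have := Finset.card_le_card this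
      simp only [Finset.card_range] at this
      omega
    exact Finset.eq_of_subset_of_card_le hsub (by simp)
  have hScard : S.card = F.card := by
    rw [hS]
    apply Finset.card_image_of_injOn
    intro a ha b hb hab
    have ha' : (a.2 : ℤ) - a.1 = d := (Finset.mem_filter.1 (Finset.mem_coe.1 ha)).2
    have hb' : (b.2 : ℤ) - b.1 = d := (Finset.mem_filter.1 (Finset.mem_coe.1 hb)).2
    simp only at hab
    rw [eq_diagCell ha', eq_diagCell hb', hab]
  constructor
  · intro hij
    have hijF : (i, j) ∈ F := by
      rw [hF, Finset.mem_filter]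
      exact ⟨hij, rfl⟩
    have : min i j ∈ S := by
      rw [hS, Finset.mem_image]
      exact ⟨(i, j), hijF, rfl⟩
    rw [hSrange, Finset.mem_range, hScard] at this
    omega
  · intro hlt
    have : min i j ∈ S := by
      rw [hSrange, Finset.mem_range, hScard]
      omega
    rw [hS, Finset.mem_image] at this
    obtain ⟨a, ha, hmin⟩ := this
    rw [hF, Finset.mem_filter] at ha
    have had : a = diagCell d (min i j) := by rw [← hmin]; exact eq_diagCell ha.2
    have hijd : (i, j) = diagCell d (min i j) := by
      apply eq_diagCell
      simp [hdd]
    rw [← hijd] at had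
    rw [← YoungDiagram.mem_cells]
    exact had ▸ ha.1

lemma contents_inj {μ ν : YoungDiagram} (h : contents μ = contents ν) : μ = ν := by
  ext ⟨i, j⟩
  rw [YoungDiagram.mem_cells, YoungDiagram.mem_cells,
    mem_iff_min_lt_count, mem_iff_min_lt_count, h]


noncomputable def TT (δ : ℂ) (n s : ℕ) (μ : YoungDiagram) : Multiset ℂ :=
  Multiset.replicate s (0 : ℂ) + (Multiset.range n).map (Nat.cast : ℕ → ℂ) +
    μ.cells.val.map (fun a => δ - ((((a.2 : ℤ) - (a.1 : ℤ) : ℤ)) : ℂ))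

lemma count_castrange (x n : ℕ) :
    Multiset.count ((x : ℕ) : ℂ) ((Multiset.range n).map (Nat.cast : ℕ → ℂ)) =
      if x < n then 1 else 0 := by
  rw [Multiset.count_map_eq_count' (Nat.cast : ℕ → ℂ) _ Nat.cast_injective]
  by_cases h : x < n
  · rw [if_pos h]
    exact Multiset.count_eq_one_of_mem (Multiset.nodup_range n) (Multiset.mem_range.2 h)
  · rw [if_neg h]
    exact Multiset.count_eq_zero_of_notMem (fun hc => h (Multiset.mem_range.1 hc))

lemma TT_aux (δ : ℂ) (k : ℕ) (hδ : ∀ n : ℕ, (n : ℤ) ≤ 2 * (k : ℤ) - 2 → δ ≠ (n : ℂ))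
    (n₁ n₂ s : ℕ) (hn₁ : n₁ ≤ k) (μ ν : YoungDiagram)
    (hν : ν.card = n₁) (hlt : n₂ < n₁) (h : TT δ n₁ s μ = TT δ n₂ s ν) : False := by
  set x₀ : ℕ := n₁ - 1 with hx₀
  have hxlt : x₀ < n₁ := by omega
  have hc := congrArg (Multiset.count ((x₀ : ℕ) : ℂ)) h
  simp only [TT, Multiset.count_add] at hc
  rw [count_castrange, count_castrange, if_pos hxlt, if_neg (by omega)] at hc
  have hν0 : Multiset.count ((x₀ : ℕ) : ℂ)
      (ν.cells.val.map (fun a => δ - ((((a.2 : ℤ) - (a.1 : ℤ) : ℤ)) : ℂ))) = 0 := by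
    rw [Multiset.count_eq_zero]
    intro hmem
    rw [Multiset.mem_map] at hmem
    obtain ⟨a, ha, hav⟩ := hmem
    have hb := cell_lt_card ν (by simpa using ha)
    rw [hν] at hb
    set c : ℤ := (a.2 : ℤ) - a.1 with hcc
    have hδeq : δ = ((c + x₀ : ℤ) : ℂ) := by
      push_cast
      rw [← hav]; ring
    have h0 : 0 ≤ c + x₀ := by omega
    have h2 : c + x₀ ≤ 2 * (k : ℤ) - 2 := by omega
    exact hδ (c + x₀).toNat (by omega) (by rw [hδeq]; congr 1; omega)
  omega

lemma TT_inj (δ : ℂ) (k : ℕ) (hδ : ∀ n : ℕ, (n : ℤ) ≤ 2 * (k : ℤ) - 2 → δ ≠ (n : ℂ))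
    (n₁ n₂ s : ℕ) (hn₁ : n₁ ≤ k) (hn₂ : n₂ ≤ k) (μ ν : YoungDiagram)
    (hμ : μ.card = n₂) (hν : ν.card = n₁) (h : TT δ n₁ s μ = TT δ n₂ s ν) :
    n₁ = n₂ ∧ μ = ν := by
  have heq : n₁ = n₂ := by
    rcases lt_trichotomy n₂ n₁ with hlt | heq | hlt
    · exact absurd (TT_aux δ k hδ n₁ n₂ s hn₁ μ ν hν hlt h) (fun f => f)
    · exact heq.symm
    · exact absurd (TT_aux δ k hδ n₂ n₁ s hn₂ ν μ hμ hlt h.symm) (fun f => f)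
  subst heq
  refine ⟨rfl, ?_⟩
  have hmaps := add_left_cancel h
  have hcontmap : (contents μ).map (fun z : ℤ => δ - (z : ℂ)) =
      (contents ν).map (fun z : ℤ => δ - (z : ℂ)) := by
    rw [contents, contents, Multiset.map_map, Multiset.map_map]
    exact hmaps
  have hginj : Function.Injective (fun z : ℤ => δ - (z : ℂ)) := by
    intro a b hab
    simp only at hab
    have : ((a : ℂ)) = b := by linear_combination -hab
    exact_mod_cast this
  exact contents_inj (Multiset.map_injective hginj hcontmap)

open MvPolynomial in
noncomputable def pm (k m : ℕ) : MvPolynomial ℕ ℂ :=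
  (∑ i ∈ (Finset.Icc 1 (2 * k)).filter (fun i => i % 2 = 1), X i ^ m) -
    C ((-1 : ℂ) ^ m) * ∑ i ∈ (Finset.Icc 1 (2 * k)).filter (fun i => i % 2 = 0), X i ^ m

lemma perm_filter_mem (r b : ℕ) (π : Equiv.Perm ℕ) (hpar : ∀ i, π i % 2 = i % 2)
    (hfix : ∀ i, i ∉ Set.Icc 1 r → π i = i) (i : ℕ) :
    i ∈ (Finset.Icc 1 r).filter (fun j => j % 2 = b) ↔
      π i ∈ (Finset.Icc 1 r).filter (fun j => j % 2 = b) := by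
  have hIcc : ∀ j : ℕ, j ∈ Finset.Icc 1 r ↔ π j ∈ Finset.Icc 1 r := by
    intro j
    constructor
    · intro hj
      by_contra hc
      have hfixed : π (π j) = π j :=
        hfix (π j) (by simpa [Set.mem_Icc, Finset.mem_Icc] using hc)
      have : π j = j := π.injective hfixed
      rw [this] at hc
      exact hc hj
    · intro hj
      by_contra hc
      have : π j = j := hfix j (by simpa [Set.mem_Icc, Finset.mem_Icc] using hc)
      rw [this] at hj
      exact hc hj
  simp only [Finset.mem_filter, hpar i]
  exact and_congr (hIcc i) Iff.rfl

lemma pm_supersymmetric (k m : ℕ) (hk : 1 ≤ k) : IsSupersymmetric (2 * k) (pm k m) := by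
  have h1O : (1 : ℕ) ∈ (Finset.Icc 1 (2 * k)).filter (fun j => j % 2 = 1) := by
    simp [Finset.mem_Icc]; omega
  have h2E : (2 : ℕ) ∈ (Finset.Icc 1 (2 * k)).filter (fun j => j % 2 = 0) := by
    simp [Finset.mem_Icc]; omega
  refine ⟨?_, ?_, ?_⟩
  · apply sub_mem
    · apply Subalgebra.sum_mem
      intro i hi
      apply pow_mem
      rw [MvPolynomial.X_mem_supported]
      have := (Finset.mem_filter.1 hi).1
      simpa [Set.mem_Icc, Finset.mem_Icc] using this
    · apply mul_mem
      · have : (C ((-1 : ℂ) ^ m) : MvPolynomial ℕ ℂ) = algebraMap ℂ _ ((-1 : ℂ) ^ m) := rfl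
        rw [this]
        exact Subalgebra.algebraMap_mem _ _
      · apply Subalgebra.sum_mem
        intro i hi
        apply pow_mem
        rw [MvPolynomial.X_mem_supported]
        have := (Finset.mem_filter.1 hi).1
        simpa [Set.mem_Icc, Finset.mem_Icc] using this
  · intro π hpar hfix
    simp only [pm, map_sub, map_mul, map_sum, map_pow, rename_X, rename_C]
    congr 1
    · exact Finset.sum_equiv π (perm_filter_mem (2 * k) 1 π hpar hfix) (fun i _ => rfl)
    · congr 1
      exact Finset.sum_equiv π (perm_filter_mem (2 * k) 0 π hpar hfix) (fun i _ => rfl)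
  · have key : ∀ y : ℂ,
        bind₁ (fun i => if i = 1 then C y else if i = 2 then C (-y) else X i) (pm k m) =
          (∑ i ∈ ((Finset.Icc 1 (2 * k)).filter (fun j => j % 2 = 1)).erase 1, X i ^ m) -
            C ((-1 : ℂ) ^ m) *
              ∑ i ∈ ((Finset.Icc 1 (2 * k)).filter (fun j => j % 2 = 0)).erase 2, X i ^ m := by
      intro y
      simp only [pm, map_sub, map_mul, map_sum, map_pow, bind₁_X_right, bind₁_C_right]
      rw [← Finset.add_sum_erase _ _ h1O, ← Finset.add_sum_erase _ _ h2E]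
      have hO' : ∀ i ∈ ((Finset.Icc 1 (2 * k)).filter (fun j => j % 2 = 1)).erase 1,
          (if i = 1 then C y else if i = 2 then C (-y) else X i) ^ m
            = (X i : MvPolynomial ℕ ℂ) ^ m := by
        intro i hi
        have h1 : i ≠ 1 := Finset.ne_of_mem_erase hi
        have h2 : i % 2 = 1 := (Finset.mem_filter.1 (Finset.mem_of_mem_erase hi)).2
        rw [if_neg h1, if_neg (by omega)]
      have hE' : ∀ i ∈ ((Finset.Icc 1 (2 * k)).filter (fun j => j % 2 = 0)).erase 2,
          (if i = 1 then C y else if i = 2 then C (-y) else X i) ^ m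
            = (X i : MvPolynomial ℕ ℂ) ^ m := by
        intro i hi
        have h1 : i ≠ 2 := Finset.ne_of_mem_erase hi
        have h2 : i % 2 = 0 := (Finset.mem_filter.1 (Finset.mem_of_mem_erase hi)).2
        rw [if_neg (by omega), if_neg h1]
      rw [Finset.sum_congr rfl hO', Finset.sum_congr rfl hE']
      rw [if_pos rfl]
      rw [show (if (2 : ℕ) = 1 then C y else if (2 : ℕ) = 2 then C (-y) else X 2)
          = (C (-y) : MvPolynomial ℕ ℂ) from by norm_num]
      rw [mul_add]
      simp only [← map_pow, ← C_mul]
      rw [show ((-1 : ℂ) ^ m * (-y) ^ m) = y ^ m from by rw [← mul_pow]; ring_nf]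
      ring
    intro y y'
    rw [key y, key y']

lemma eval_pm (k m : ℕ) (c : ℕ → ℂ) :
    eval c (pm k m) =
      ((((Finset.Icc 1 (2 * k)).filter (fun i => i % 2 = 1)).val.map c).map (· ^ m)).sum -
        (-1 : ℂ) ^ m *
          ((((Finset.Icc 1 (2 * k)).filter (fun i => i % 2 = 0)).val.map c).map (· ^ m)).sum := by
  simp only [pm, map_sub, map_mul, map_sum, map_pow, eval_X, eval_C]
  rw [Finset.sum_eq_multiset_sum, Finset.sum_eq_multiset_sum, Multiset.map_map, Multiset.map_map]
  rfl

end Aux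

/-- In the semisimple case (`δ ∉ {0,…,2k-2}`), distinct indices `(λ,l) ≠ (ρ,r)`
of simple modules are separated by a supersymmetric polynomial evaluated at the
contents of the respective standard paths. -/
theorem supersymmetric_distinguishes_simples
    (δ : ℂ) (k : ℕ) (hδ : ∀ n : ℕ, (n : ℤ) ≤ 2 * (k : ℤ) - 2 → δ ≠ (n : ℂ))
    (l r : ℕ) (hl : l ≤ k) (hr : r ≤ k)
    (lam rho : YoungDiagram) (hlam : lam.card = k - l) (hrho : rho.card = k - r)
    (hne : ¬(lam = rho ∧ l = r))
    (clam crho : ℕ → ℂ)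
    (hclam : IsContentVector δ k l lam clam)
    (hcrho : IsContentVector δ k r rho crho) :
    ∃ p : MvPolynomial ℕ ℂ, IsSupersymmetric (2 * k) p ∧
      MvPolynomial.eval clam p ≠ MvPolynomial.eval crho p := by
  classical
  rcases Nat.eq_zero_or_pos k with hk0 | hk
  · subst hk0
    have hl0 : l = 0 := Nat.le_zero.1 hl
    have hr0 : r = 0 := Nat.le_zero.1 hr
    have hlam0 : lam.cells = ∅ := Finset.card_eq_zero.1 (by simpa using hlam)
    have hrho0 : rho.cells = ∅ := Finset.card_eq_zero.1 (by simpa using hrho)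
    exact absurd ⟨YoungDiagram.ext (by rw [hlam0, hrho0]), hl0.trans hr0.symm⟩ hne
  obtain ⟨hc1, hc2⟩ := hclam
  obtain ⟨hd1, hd2⟩ := hcrho
  set A1 : Multiset ℂ := Multiset.replicate l (-(δ / 2)) +
    (Multiset.range (k - l)).map (fun i => (i : ℂ) - δ / 2) with hA1
  set B1 : Multiset ℂ := Multiset.replicate l (δ / 2) +
    lam.cells.val.map (fun a => ((((a.2 : ℤ) - (a.1 : ℤ) : ℤ)) : ℂ) - δ / 2) with hB1
  set A2 : Multiset ℂ := Multiset.replicate r (-(δ / 2)) +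
    (Multiset.range (k - r)).map (fun i => (i : ℂ) - δ / 2) with hA2
  set B2 : Multiset ℂ := Multiset.replicate r (δ / 2) +
    rho.cells.val.map (fun a => ((((a.2 : ℤ) - (a.1 : ℤ) : ℤ)) : ℂ) - δ / 2) with hB2
  clear_value A1 B1 A2 B2
  have hshift : ∀ (s₁ s₂ : ℕ) (μ : YoungDiagram),
      (Multiset.replicate s₁ (-(δ / 2)) +
        (Multiset.range (k - s₁)).map (fun i => (i : ℂ) - δ / 2) +
        (Multiset.replicate s₂ (δ / 2) +
          μ.cells.val.map (fun a => ((((a.2 : ℤ) - (a.1 : ℤ) : ℤ)) : ℂ) - δ / 2)).map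
            (fun x => -x)).map (fun z => z + δ / 2) = TT δ (k - s₁) (s₁ + s₂) μ := by
    intro s₁ s₂ μ
    rw [TT]
    simp only [Multiset.map_add, Multiset.map_replicate, Multiset.map_map, Multiset.pure_def,
      Multiset.bind_def, Multiset.bind_singleton, neg_add_cancel]
    have h1 : Multiset.map ((fun x : ℂ => x + δ / 2) ∘ (fun x : ℂ => x - δ / 2) ∘
        (Nat.cast : ℕ → ℂ)) (Multiset.range (k - s₁))
        = (Multiset.range (k - s₁)).map (Nat.cast : ℕ → ℂ) := by
      apply Multiset.map_congr rfl
      intro x _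
      simp [Function.comp]
    have h2 : (μ.cells.val.map ((fun z => z + δ / 2) ∘ ((fun x : ℂ => -x) ∘
        fun a : ℕ × ℕ => ((((a.2 : ℤ) - (a.1 : ℤ) : ℤ)) : ℂ) - δ / 2)))
        = μ.cells.val.map (fun a => δ - ((((a.2 : ℤ) - (a.1 : ℤ) : ℤ)) : ℂ)) := by
      apply Multiset.map_congr rfl
      intro x _
      simp only [Function.comp_apply]
      ring
    rw [h2, h1, Multiset.replicate_add]
    abel
  have hUV : A1 + B2.map (fun x => -x) ≠ A2 + B1.map (fun x => -x) := by
    intro hEq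
    rw [hA1, hB2, hA2, hB1] at hEq
    have hT := congrArg (Multiset.map (fun z : ℂ => z + δ / 2)) hEq
    rw [hshift l r rho, hshift r l lam, show r + l = l + r from by ring] at hT
    obtain ⟨hn, hmu⟩ := TT_inj δ k hδ (k - l) (k - r) (l + r)
      (Nat.sub_le k l) (Nat.sub_le k r) rho lam hrho hlam hT
    exact hne ⟨hmu.symm, by omega⟩
  have hmex : ∃ m : ℕ,
      (((A1 + B2.map (fun x => -x)).map (· ^ m)).sum ≠
        ((A2 + B1.map (fun x => -x)).map (· ^ m)).sum) := by
    by_contra hcon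
    push_neg at hcon
    exact hUV (psum_multiset_eq hcon)
  obtain ⟨m, hm⟩ := hmex
  refine ⟨pm k m, pm_supersymmetric k m hk, ?_⟩
  have heval1 : MvPolynomial.eval clam (pm k m) =
      (A1.map (· ^ m)).sum - (-1 : ℂ) ^ m * (B1.map (· ^ m)).sum := by
    rw [eval_pm, hc1, hc2]
  have heval2 : MvPolynomial.eval crho (pm k m) =
      (A2.map (· ^ m)).sum - (-1 : ℂ) ^ m * (B2.map (· ^ m)).sum := by
    rw [eval_pm, hd1, hd2]
  have hnegsum : ∀ s : Multiset ℂ,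
      ((s.map (fun x => -x)).map (· ^ m)).sum = (-1 : ℂ) ^ m * (s.map (· ^ m)).sum := by
    intro s
    rw [Multiset.map_map]
    have hfun : ((· ^ m) ∘ fun x : ℂ => -x) = fun x : ℂ => (-1 : ℂ) ^ m * x ^ m := by
      funext x
      simp only [Function.comp_apply]
      rw [show -x = (-1 : ℂ) * x from by ring, mul_pow]
    rw [hfun]
    exact Multiset.sum_map_mul_left.trans rfl
  have hdiff : MvPolynomial.eval clam (pm k m) - MvPolynomial.eval crho (pm k m) =
      ((A1 + B2.map (fun x => -x)).map (· ^ m)).sum -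
        ((A2 + B1.map (fun x => -x)).map (· ^ m)).sum := by
    rw [heval1, heval2, Multiset.map_add, Multiset.map_add,
      Multiset.sum_add, Multiset.sum_add, hnegsum B2, hnegsum B1]
    ring
  intro hEq
  apply hm
  have hd := hdiff
  rw [hEq, sub_self] at hd
  exact sub_eq_zero.1 hd.symm
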